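/- arXiv:2309.04123 — 3 statements merged into one kernel-verified Lean document; each statement's English description precedes it below -/
import Mathlib

section
/- Let i : [m] → V be a function with ker[i] = π for some partition π of [m]. Then for any digraph G = (V, E), the equality ker_G[i] = ker[i] holds if and only if G_{π(i)} is a subgraph of G (i.e., every edge of G_{π(i)} is an edge of G). -/
open scoped Classical
open Filter

noncomputable section

/-- The relation defining the kernel of `f` restricted to the index set `S`,
subordinated to the digraph with edge relation `E`: `k ∼ k'` iff `f k = f k'` and
every `l ∈ S` strictly between `k` and `k'` with `f l ≠ f k` satisfies `(f l, f k) ∈ E`. -/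
def kerGRelOn {m : ℕ} {V : Type*} (E : V → V → Prop) (f : Fin m → V)
    (S : Finset (Fin m)) (k k' : Fin m) : Prop :=
  f k = f k' ∧ ∀ l ∈ S, min k k' < l → l < max k k' → f l ≠ f k → E (f l) (f k)

/-- The blocks of the kernel of `f|_S` subordinated to the digraph `E`. -/
def kerGBlocks {m : ℕ} {V : Type*} (E : V → V → Prop) (f : Fin m → V)
    (S : Finset (Fin m)) : Finset (Finset (Fin m)) :=
  S.image fun k => S.filter fun k' => kerGRelOn E f S k k'

/-- The blocks of the plain kernel `ker[f]` of `f : [m] → V`. -/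
def kerBlocks {m : ℕ} {V : Type*} (f : Fin m → V) : Finset (Finset (Fin m)) :=
  Finset.univ.image fun k => Finset.univ.filter fun k' => f k = f k'

/-- The product of `a k` for `k ∈ B`, taken in increasing order of `k`. -/
def blockProd {A : Type*} [Monoid A] {m : ℕ} (a : Fin m → A) (B : Finset (Fin m)) : A :=
  ((B.sort (· ≤ ·)).map a).prod

/-- The edge set of the nesting-crossing graph of the partition `π`, relabeled along `f`:
the pair `(f-label of B, f-label of C)` is an edge whenever `B ≠ C` are blocks of `π` and
some `l ∈ B` lies strictly between two elements (equivalently, between min and max) of `C`. -/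
def nestCrossEdges {m : ℕ} {V : Type*} (π : Finset (Finset (Fin m))) (f : Fin m → V) :
    Set (V × V) :=
  { p | ∃ B ∈ π, ∃ C ∈ π, B ≠ C ∧
      (∃ l ∈ B, ∃ c₁ ∈ C, ∃ c₂ ∈ C, c₁ < l ∧ l < c₂) ∧
      (∃ k ∈ B, f k = p.1) ∧ (∃ k' ∈ C, f k' = p.2) }

/-- A family of (non-unital) subalgebras of a non-commutative probability space `(𝒜, φ)`
is BMT independent with respect to the digraph `E` on the index set `I`. -/
def BMTIndep {𝒜 : Type*} [Ring 𝒜] [Algebra ℂ 𝒜] (φ : 𝒜 →ₗ[ℂ] ℂ)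
    {I : Type*} (E : I → I → Prop) (A : I → NonUnitalSubalgebra ℂ 𝒜) : Prop :=
  ∀ (m : ℕ), 1 ≤ m → ∀ (idx : Fin m → I) (a : Fin m → 𝒜),
    (∀ k, a k ∈ A (idx k)) →
    φ (List.ofFn a).prod = ∏ B ∈ kerGBlocks E idx Finset.univ, φ (blockProd a B)

/-- Random variables `a 0, …, a (N-1)` are BMT independent with respect to the digraph `E`. -/
def BMTIndepVars {𝒜 : Type*} [Ring 𝒜] [Algebra ℂ 𝒜] (φ : 𝒜 →ₗ[ℂ] ℂ)
    {N : ℕ} (E : Fin N → Fin N → Prop) (a : Fin N → 𝒜) : Prop :=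
  ∀ (m : ℕ) (idx : Fin m → Fin N),
    φ (List.ofFn fun k => a (idx k)).prod
      = ∏ B ∈ kerGBlocks E idx Finset.univ, φ (blockProd (fun k => a (idx k)) B)


/-- `ker_G[i] = ker[i]` iff `G_{π(i)}` is a subgraph of `G`. -/
theorem stmt1 {m : ℕ} {V : Type*} (E : V → V → Prop) (hE : ∀ v, ¬ E v v)
    (i : Fin m → V) (π : Finset (Finset (Fin m))) (hπ : π = kerBlocks i) :
    kerGBlocks E i Finset.univ = kerBlocks i ↔
      ∀ p ∈ nestCrossEdges π i, E p.1 p.2 := by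
  subst hπ
  have hrefl : ∀ k : Fin m, kerGRelOn E i Finset.univ k k := by
    intro k
    refine ⟨rfl, fun l _ h1 h2 _ => absurd (h1.trans h2) ?_⟩
    simp
  constructor
  · intro h p hp
    obtain ⟨B, hB, C, hC, hBC, ⟨l, hlB, c₁, hc₁, c₂, hc₂, hlt1, hlt2⟩,
      ⟨k, hkB, hk⟩, ⟨k', hk'C, hk'⟩⟩ := hp
    simp only [kerBlocks, Finset.mem_image, Finset.mem_univ, true_and] at hB hC
    obtain ⟨b₀, rfl⟩ := hB
    obtain ⟨c₀, rfl⟩ := hC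
    simp only [Finset.mem_filter, Finset.mem_univ, true_and] at hlB hc₁ hc₂ hkB hk'C
    have hne : i l ≠ i c₁ := by
      intro hEq
      apply hBC
      ext x
      simp only [Finset.mem_filter, Finset.mem_univ, true_and]
      rw [hlB, hEq, hc₁]
    -- the G-block of c₁ is a plain kernel block, hence contains c₂
    have hrel : kerGRelOn E i Finset.univ c₁ c₂ := by
      have hmem : (Finset.univ.filter fun k' => kerGRelOn E i Finset.univ c₁ k')
          ∈ kerGBlocks E i Finset.univ := by
        simp only [kerGBlocks, Finset.mem_image, Finset.mem_univ, true_and]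
        exact ⟨c₁, rfl⟩
      rw [h] at hmem
      simp only [kerBlocks, Finset.mem_image, Finset.mem_univ, true_and] at hmem
      obtain ⟨d, hd⟩ := hmem
      have hc₁mem : c₁ ∈ Finset.univ.filter fun k' => kerGRelOn E i Finset.univ c₁ k' := by
        simp only [Finset.mem_filter, Finset.mem_univ, true_and]
        exact hrefl c₁
      rw [← hd] at hc₁mem
      simp only [Finset.mem_filter, Finset.mem_univ, true_and] at hc₁mem
      have hc₂mem : c₂ ∈ Finset.univ.filter fun k' => i d = i k' := by
        simp only [Finset.mem_filter, Finset.mem_univ, true_and]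
        rw [hc₁mem, ← hc₁, hc₂]
      rw [hd] at hc₂mem
      simpa using hc₂mem
    have hEdge : E (i l) (i c₁) := by
      refine hrel.2 l (Finset.mem_univ l) ?_ ?_ hne
      · exact lt_of_le_of_lt (min_le_left _ _) hlt1
      · exact lt_of_lt_of_le hlt2 (le_max_right _ _)
    have h1 : p.1 = i l := by rw [← hk, ← hkB, hlB]
    have h2 : p.2 = i c₁ := by rw [← hk', ← hk'C, hc₁]
    rw [h1, h2]; exact hEdge
  · intro h
    have key : ∀ k k' : Fin m, kerGRelOn E i Finset.univ k k' ↔ i k = i k' := by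
      intro k k'
      constructor
      · exact fun hr => hr.1
      · intro hEq
        refine ⟨hEq, fun l _ h1 h2 hne => ?_⟩
        have hminC : i k = i (min k k') := by
          rcases min_cases k k' with ⟨he, _⟩ | ⟨he, _⟩ <;> rw [he]
          exact hEq
        have hmaxC : i k = i (max k k') := by
          rcases max_cases k k' with ⟨he, _⟩ | ⟨he, _⟩ <;> rw [he]
          exact hEq
        refine h (i l, i k) ⟨Finset.univ.filter fun x => i l = i x, ?_,
          Finset.univ.filter fun x => i k = i x, ?_, ?_,
          ⟨l, ?_, min k k', ?_, max k k', ?_, h1, h2⟩, ⟨l, ?_, rfl⟩, ⟨k, ?_, rfl⟩⟩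
        · simp only [kerBlocks, Finset.mem_image, Finset.mem_univ, true_and]
          exact ⟨l, rfl⟩
        · simp only [kerBlocks, Finset.mem_image, Finset.mem_univ, true_and]
          exact ⟨k, rfl⟩
        · intro hEq'
          have : l ∈ Finset.univ.filter fun x => i l = i x := by simp
          rw [hEq'] at this
          simp only [Finset.mem_filter, Finset.mem_univ, true_and] at this
          exact hne this.symm
        · simp
        · simp only [Finset.mem_filter, Finset.mem_univ, true_and]
          exact hminC
        · simp only [Finset.mem_filter, Finset.mem_univ, true_and]
          exact hmaxC
        · simp
        · simp
    unfold kerGBlocks kerBlocks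
    apply Finset.image_congr
    intro k _
    ext k'
    simp [key k k']

end
end

section
/- Let (𝒜, φ) be a non-commutative probability space and (𝒜_i)_{i∈I} a family of subalgebras that is BMT independent with respect to a digraph G = (I, E). If I carries a total order < and G is the digraph of this order, i.e., (i, j) ∈ E if and only if j < i, then the family (𝒜_i)_{i∈I} is monotone independent. -/
open scoped Classical
open Filter

noncomputable section

/-!
For the digraph of a total order, `k ∼ k'` holds exactly when `i_k = i_{k'}` and no index
strictly between them is smaller than `i_k`. At a peak `i_{k-1} < i_k > i_{k+1}` this makes `{k}`
a block of its own, and deleting position `k` changes no other relation, because the witness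
`i_{k-1}` is already smaller than `i_k`; BMT independence then factors out `φ(a_k)`. For a
V-shaped sequence `i_1 > ⋯ > i_k < ⋯ < i_m` every pair of equal indices has a strictly smaller
index between them, so all blocks are singletons.
-/

open Finset

section KernelRelation

variable {V : Type*} {E : V → V → Prop}

lemma kerGRelOn_refl {m : ℕ} (f : Fin m → V) (S : Finset (Fin m)) (k : Fin m) :
    kerGRelOn E f S k k :=
  ⟨rfl, fun _ _ h₁ h₂ _ => absurd (h₁.trans h₂) (by simp)⟩

lemma kerGRelOn_comm {m : ℕ} {f : Fin m → V} {S : Finset (Fin m)} {k k' : Fin m} :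
    kerGRelOn E f S k k' ↔ kerGRelOn E f S k' k := by
  suffices ∀ k k', kerGRelOn E f S k k' → kerGRelOn E f S k' k from ⟨this k k', this k' k⟩
  rintro k k' ⟨heq, hbetween⟩
  refine ⟨heq.symm, fun l hl h₁ h₂ hne => ?_⟩
  rw [← heq] at hne ⊢
  exact hbetween l hl (min_comm k k' ▸ h₁) (max_comm k k' ▸ h₂) hne

lemma kerGBlocks_univ_eq_image_singleton {m : ℕ} {f : Fin m → V}
    (h : ∀ p q, p < q → ¬ kerGRelOn E f univ p q) :
    kerGBlocks E f univ = univ.image ({·}) := by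
  refine image_congr fun p _ => ?_
  ext q
  simp only [mem_filter, mem_univ, true_and, mem_singleton]
  refine ⟨fun hpq => ?_, fun hq => by subst hq; exact kerGRelOn_refl f univ _⟩
  rcases lt_trichotomy p q with hlt | rfl | hgt
  · exact absurd hpq (h p q hlt)
  · rfl
  · exact absurd (kerGRelOn_comm.mp hpq) (h q p hgt)

lemma kerGBlocks_univ_eq_insert_map_succAbove {n : ℕ} {f : Fin (n + 1) → V} {K : Fin (n + 1)}
    (hK : ∀ y, kerGRelOn E f univ K y → y = K)
    (hrel : ∀ p q, kerGRelOn E (f ∘ K.succAbove) univ p q ↔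
      kerGRelOn E f univ (K.succAbove p) (K.succAbove q)) :
    kerGBlocks E f univ =
      insert {K} ((kerGBlocks E (f ∘ K.succAbove) univ).image (Finset.map K.succAboveEmb)) := by
  have hblockK : univ.filter (kerGRelOn E f univ K) = {K} := by
    ext y
    simp only [mem_filter, mem_univ, true_and, mem_singleton]
    exact ⟨hK y, fun hy => by subst hy; exact kerGRelOn_refl f univ _⟩
  have hblock : ∀ p, univ.filter (kerGRelOn E f univ (K.succAbove p)) =
      (univ.filter (kerGRelOn E (f ∘ K.succAbove) univ p)).map K.succAboveEmb := by
    intro p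
    ext y
    simp only [mem_filter, mem_univ, true_and, Finset.mem_map, Fin.coe_succAboveEmb]
    constructor
    · intro hy
      obtain ⟨q, rfl⟩ := Fin.exists_succAbove_eq fun hyK : y = K =>
        K.succAbove_ne p (hK _ (kerGRelOn_comm.mp (hyK ▸ hy)))
      exact ⟨q, (hrel p q).mpr hy, rfl⟩
    · rintro ⟨q, hq, rfl⟩
      exact (hrel p q).mp hq
  ext B
  simp only [kerGBlocks, mem_insert, mem_image, mem_univ, true_and]
  constructor
  · rintro ⟨x, rfl⟩
    by_cases hx : x = K
    · exact .inl (hx ▸ hblockK)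
    · obtain ⟨p, rfl⟩ := Fin.exists_succAbove_eq hx
      exact .inr ⟨_, ⟨p, rfl⟩, (hblock p).symm⟩
  · rintro (rfl | ⟨_, ⟨p, rfl⟩, rfl⟩)
    · exact ⟨K, hblockK⟩
    · exact ⟨K.succAbove p, hblock p⟩

end KernelRelation

lemma blockProd_singleton {A : Type*} [Monoid A] {m : ℕ} (a : Fin m → A) (k : Fin m) :
    blockProd a {k} = a k := by
  simp [blockProd]

lemma blockProd_map {A : Type*} [Monoid A] {m n : ℕ} (a : Fin m → A) {e : Fin n ↪ Fin m}
    (he : StrictMono e) (B : Finset (Fin n)) :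
    blockProd a (B.map e) = blockProd (a ∘ e) B := by
  rw [blockProd, blockProd, ← (he.strictMonoOn (B : Set (Fin n))).map_finsetSort, List.map_map]

lemma List.eraseIdx_ofFn {α : Type*} {n : ℕ} (a : Fin (n + 1) → α) (K : Fin (n + 1)) :
    (List.ofFn a).eraseIdx K = List.ofFn (a ∘ K.succAbove) := by
  refine List.ext_getElem (by simp [List.length_eraseIdx, Nat.lt_succ_iff.mp K.isLt])
    fun j _ h => ?_
  simp only [List.length_ofFn] at h
  simp only [List.getElem_eraseIdx, List.getElem_ofFn, Function.comp_apply]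
  split_ifs with hj
  · rw [Fin.succAbove_of_castSucc_lt K ⟨j, h⟩ hj]
    rfl
  · rw [Fin.succAbove_of_le_castSucc K ⟨j, h⟩ (not_lt.mp hj)]
    rfl

section BMTIndep

variable {𝒜 : Type*} [Ring 𝒜] [Algebra ℂ 𝒜] {φ : 𝒜 →ₗ[ℂ] ℂ} {I : Type*} {E : I → I → Prop}
  {A : I → NonUnitalSubalgebra ℂ 𝒜}

lemma BMTIndep.apply_prod_ofFn_eq_prod (hindep : BMTIndep φ E A) {m : ℕ} (hm : 1 ≤ m)
    {idx : Fin m → I} {a : Fin m → 𝒜} (ha : ∀ k, a k ∈ A (idx k))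
    (hsep : ∀ p q, p < q → ¬ kerGRelOn E idx univ p q) :
    φ (List.ofFn a).prod = ∏ k, φ (a k) := by
  rw [hindep m hm idx a ha, kerGBlocks_univ_eq_image_singleton hsep,
    prod_image fun _ _ _ _ h => singleton_injective h]
  simp only [blockProd_singleton]

lemma BMTIndep.apply_prod_ofFn_eq_mul_eraseIdx (hindep : BMTIndep φ E A) {n : ℕ} (hn : 1 ≤ n)
    {idx : Fin (n + 1) → I} {a : Fin (n + 1) → 𝒜} (ha : ∀ k, a k ∈ A (idx k)) {K : Fin (n + 1)}
    (hK : ∀ y, kerGRelOn E idx univ K y → y = K)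
    (hrel : ∀ p q, kerGRelOn E (idx ∘ K.succAbove) univ p q ↔
      kerGRelOn E idx univ (K.succAbove p) (K.succAbove q)) :
    φ (List.ofFn a).prod = φ (a K) * φ ((List.ofFn a).eraseIdx K).prod := by
  have hKnew : {K} ∉ (kerGBlocks E (idx ∘ K.succAbove) univ).image (Finset.map K.succAboveEmb) := by
    simp only [mem_image, not_exists, not_and]
    intro B _ hB
    obtain ⟨p, -, hp⟩ := Finset.mem_map.mp (hB ▸ mem_singleton_self K)
    exact K.succAbove_ne p hp
  rw [hindep _ (by omega) idx a ha, kerGBlocks_univ_eq_insert_map_succAbove hK hrel,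
    prod_insert hKnew, prod_image fun _ _ _ _ h => Finset.map_injective _ h, blockProd_singleton,
    List.eraseIdx_ofFn, hindep n hn (idx ∘ K.succAbove) (a ∘ K.succAbove) fun k => ha _]
  simp only [blockProd_map a (e := K.succAboveEmb) (Fin.strictMono_succAbove K)]
  rfl

end BMTIndep

section TotalOrder

variable {I : Type*} [LinearOrder I]

lemma kerGRelOn_gt_iff {m : ℕ} {f : Fin m → I} {p q : Fin m} (hpq : p ≤ q) :
    kerGRelOn (· > ·) f univ p q ↔ f p = f q ∧ ∀ l, p ≤ l → l ≤ q → f p ≤ f l := by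
  simp only [kerGRelOn, min_eq_left hpq, max_eq_right hpq, mem_univ, true_implies, gt_iff_lt]
  refine and_congr_right fun heq => ⟨fun h l hpl hlq => ?_, fun h l hpl hlq _ => ?_⟩
  · rcases hpl.lt_or_eq with hpl | rfl
    · rcases hlq.lt_or_eq with hlq | rfl
      · by_cases hfl : f l = f p
        · exact hfl.ge
        · exact (h l hpl hlq hfl).le
      · exact heq.le
    · exact le_rfl
  · exact (h l hpl.le hlq.le).lt_of_ne' ‹_›

lemma not_kerGRelOn_gt_of_valley {m : ℕ} {f : Fin m → I} {K : Fin m}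
    (hdec : ∀ i j : Fin m, i.val + 1 = j.val → j ≤ K → f j < f i)
    (hinc : ∀ i j : Fin m, i.val + 1 = j.val → K ≤ i → f i < f j) (p q : Fin m) (hpq : p < q) :
    ¬ kerGRelOn (· > ·) f univ p q := by
  rw [kerGRelOn_gt_iff hpq.le]
  rintro ⟨heq, hmin⟩
  have hpq : (p : ℕ) < q := hpq
  by_cases hpK : p < K
  · have hpK : (p : ℕ) < K := hpK
    let j : Fin m := ⟨p + 1, by omega⟩
    exact not_lt.mpr (hmin j (Fin.le_def.mpr (by simp [j])) (Fin.le_def.mpr (by simp [j]; omega)))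
      (hdec p j rfl (Fin.le_def.mpr (by simp [j]; omega)))
  · have hKp : (K : ℕ) ≤ p := not_lt.mp hpK
    let i : Fin m := ⟨q - 1, by omega⟩
    exact not_lt.mpr (hmin i (Fin.le_def.mpr (by simp [i]; omega)) (Fin.le_def.mpr (by simp [i])))
      (heq ▸ hinc i q (by simp [i]; omega) (Fin.le_def.mpr (by simp [i]; omega)))

variable {n : ℕ} {f : Fin (n + 1) → I} {K i j : Fin (n + 1)}

lemma eq_of_kerGRelOn_gt_of_peak (hi : i.val + 1 = K.val) (hj : K.val + 1 = j.val)
    (hfi : f i < f K) (hfj : f j < f K) (y : Fin (n + 1)) (hy : kerGRelOn (· > ·) f univ K y) :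
    y = K := by
  by_contra hyK
  rcases lt_or_gt_of_ne hyK with hlt | hgt
  · obtain ⟨heq, hmin⟩ := (kerGRelOn_gt_iff hlt.le).mp (kerGRelOn_comm.mp hy)
    have : f y ≤ f i := hmin i (Fin.le_def.mpr (by omega)) (Fin.le_def.mpr (by omega))
    exact (this.trans_lt hfi).ne heq
  · obtain ⟨-, hmin⟩ := (kerGRelOn_gt_iff hgt.le).mp hy
    exact not_lt.mpr (hmin j (Fin.le_def.mpr (by omega)) (Fin.le_def.mpr (by omega))) hfj

lemma kerGRelOn_gt_succAbove_iff (hi : i.val + 1 = K.val) (hfi : f i < f K) (p q : Fin n) :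
    kerGRelOn (· > ·) (f ∘ K.succAbove) univ p q ↔
      kerGRelOn (· > ·) f univ (K.succAbove p) (K.succAbove q) := by
  wlog hpq : p ≤ q generalizing p q
  · rw [kerGRelOn_comm, this q p (le_of_not_ge hpq), kerGRelOn_comm]
  have hpq' : K.succAbove p ≤ K.succAbove q := Fin.succAbove_le_succAbove_iff.mpr hpq
  rw [kerGRelOn_gt_iff hpq, kerGRelOn_gt_iff hpq']
  refine and_congr_right fun _ => ⟨fun hmin l hpl hlq => ?_, fun hmin l hpl hlq =>
    hmin _ (Fin.succAbove_le_succAbove_iff.mpr hpl) (Fin.succAbove_le_succAbove_iff.mpr hlq)⟩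
  have hmin' : ∀ l, K.succAbove p ≤ l → l ≤ K.succAbove q → l ≠ K → f (K.succAbove p) ≤ f l := by
    intro l hpl hlq hlK
    obtain ⟨l, rfl⟩ := Fin.exists_succAbove_eq hlK
    exact hmin l (Fin.succAbove_le_succAbove_iff.mp hpl) (Fin.succAbove_le_succAbove_iff.mp hlq)
  by_cases hlK : l = K
  · rw [hlK] at hpl hlq ⊢
    have hpK : (K.succAbove p : ℕ) < K := (K.succAbove_ne p).lt_of_le hpl
    have hlq : (K : ℕ) ≤ K.succAbove q := hlq
    exact (hmin' i (Fin.le_def.mpr (by omega)) (Fin.le_def.mpr (by omega))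
      (Fin.ne_of_val_ne (by omega))).trans hfi.le
  · exact hmin' l hpl hlq hlK

end TotalOrder

/-- BMT independence with respect to the digraph of a total order
(`(i,j)` an edge iff `j < i`) gives monotone independence (conditions M.1 and M.2). -/
theorem stmt4 {𝒜 : Type*} [Ring 𝒜] [Algebra ℂ 𝒜] (φ : 𝒜 →ₗ[ℂ] ℂ)
    {I : Type*} [LinearOrder I] (E : I → I → Prop)
    (horder : ∀ v w : I, E v w ↔ w < v)
    (A : I → NonUnitalSubalgebra ℂ 𝒜) (hindep : BMTIndep φ E A) :
    ∀ (m : ℕ), 1 ≤ m → ∀ (idx : Fin m → I) (a : Fin m → 𝒜),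
      (∀ k, a k ∈ A (idx k)) →
      (∀ (k : ℕ) (h : k + 1 < m), idx ⟨k, by omega⟩ ≠ idx ⟨k + 1, h⟩) →
      ((∀ (k : ℕ) (h1 : 1 ≤ k) (h2 : k + 1 < m),
          idx ⟨k - 1, by omega⟩ < idx ⟨k, by omega⟩ →
          idx ⟨k + 1, h2⟩ < idx ⟨k, by omega⟩ →
          φ (List.ofFn a).prod
            = φ (a ⟨k, by omega⟩) * φ ((List.ofFn a).eraseIdx k).prod)
        ∧
        (∀ (k : ℕ) (hk : k < m),
          (∀ (j : ℕ) (hj : j + 1 ≤ k), idx ⟨j + 1, by omega⟩ < idx ⟨j, by omega⟩) →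
          (∀ (j : ℕ) (hj : k ≤ j) (hj2 : j + 1 < m), idx ⟨j, by omega⟩ < idx ⟨j + 1, hj2⟩) →
          φ (List.ofFn a).prod = ∏ k : Fin m, φ (a k))) := by
  obtain rfl : E = (· > ·) := funext₂ fun v w => propext (horder v w)
  intro m hm idx a ha _
  refine ⟨fun k hk hkm hprev hnext => ?_, fun k hk hdec hinc => ?_⟩
  · obtain ⟨n, rfl⟩ : ∃ n, m = n + 1 := ⟨m - 1, by omega⟩
    exact hindep.apply_prod_ofFn_eq_mul_eraseIdx (K := ⟨k, by omega⟩) (by omega) ha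
      (eq_of_kerGRelOn_gt_of_peak (i := ⟨k - 1, by omega⟩) (j := ⟨k + 1, hkm⟩)
        (by simp only; omega) rfl hprev hnext)
      (kerGRelOn_gt_succAbove_iff (i := ⟨k - 1, by omega⟩) (by simp only; omega) hprev)
  · refine hindep.apply_prod_ofFn_eq_prod hm ha
      (not_kerGRelOn_gt_of_valley (K := ⟨k, hk⟩) ?_ ?_)
    · rintro ⟨i, _⟩ ⟨_, _⟩ rfl hjk
      exact hdec i hjk
    · rintro ⟨i, _⟩ ⟨_, hj⟩ rfl hki
      exact hinc i hki hj
end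
end

section
/- Let (𝒜_i)_{i∈I} be subalgebras of a non-commutative probability space (𝒜, φ) that are BMT independent with respect to a digraph G = (I, E). Let a_1 a_2 ⋯ a_m be a (not necessarily alternating) product with a_k ∈ 𝒜_{i_k} and i = (i_1, …, i_m). If there exist 1 ≤ ℓ < ℓ' ≤ m such that, with S = {ℓ, ℓ+1, …, ℓ'−1}, both ker_G[i|_S] and ker_G[i|_{S^c}] are contained (as sets of blocks) in ker_G[i], then φ(a_1 ⋯ a_m) = φ(a_ℓ ⋯ a_{ℓ'−1}) · φ(a_1 ⋯ a_{ℓ−1} a_{ℓ'} ⋯ a_m). -/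
open scoped Classical
open Filter

noncomputable section

/-!
Restricting BMT independence to an arbitrary set `T` of positions, relabelled increasingly
(which preserves the subordinated kernel), gives `φ (a|_T) = ∏_{B ∈ ker_G[i|_T]} φ (a|_B)`.
The two containments force `ker_G[i]` to be the disjoint union of `ker_G[i|_S]` and
`ker_G[i|_{Sᶜ}]`, so the product over `ker_G[i]` splits into the two factors.
-/

open Finset

theorem Set.mem_uIoo_or_mem_uIoo_of_ne {α : Type*} [LinearOrder α] {a b c x : α}
    (hx : x ∈ Set.uIoo a c) (hb : x ≠ b) : x ∈ Set.uIoo a b ∨ x ∈ Set.uIoo b c := by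
  simp only [Set.uIoo, Set.mem_Ioo, inf_lt_iff, lt_sup_iff] at hx ⊢
  rcases lt_or_gt_of_ne hb with h | h <;> tauto

section Kernel

variable {m : ℕ} {V : Type*} {E : V → V → Prop} {f : Fin m → V} {S T : Finset (Fin m)}

theorem kerGRelOn_equivalence : Equivalence (kerGRelOn E f T) where
  refl _ := ⟨rfl, fun _ _ h₁ h₂ _ => absurd (h₁.trans h₂) (lt_irrefl _)⟩
  symm {k k'} h := by
    refine ⟨h.1.symm, fun l hl hlo hhi hne => ?_⟩
    rw [← h.1] at hne ⊢
    exact h.2 l hl (min_comm k k' ▸ hlo) (max_comm k k' ▸ hhi) hne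
  trans {k j x} h₁ h₂ := by
    refine ⟨h₁.1.trans h₂.1, fun l hl hlo hhi hne => ?_⟩
    have hlj : l ≠ j := by rintro rfl; exact hne h₁.1.symm
    rcases Set.mem_uIoo_or_mem_uIoo_of_ne ⟨hlo, hhi⟩ hlj with ⟨ha, hb⟩ | ⟨ha, hb⟩
    · exact h₁.2 l hl ha hb hne
    · rw [h₁.1] at hne ⊢
      exact h₂.2 l hl ha hb hne

variable (E f T) in
def kerGBlock (k : Fin m) : Finset (Fin m) :=
  T.filter (kerGRelOn E f T k)

theorem kerGBlocks_eq_image : kerGBlocks E f T = T.image (kerGBlock E f T) := rfl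

theorem mem_kerGBlock_self {k : Fin m} (hk : k ∈ T) : k ∈ kerGBlock E f T k :=
  mem_filter.2 ⟨hk, kerGRelOn_equivalence.refl k⟩

theorem kerGBlock_mem_kerGBlocks {k : Fin m} (hk : k ∈ T) :
    kerGBlock E f T k ∈ kerGBlocks E f T :=
  mem_image_of_mem _ hk

theorem eq_kerGBlock_of_mem {B : Finset (Fin m)} {k : Fin m} (hB : B ∈ kerGBlocks E f T)
    (hk : k ∈ B) : B = kerGBlock E f T k := by
  obtain ⟨j, -, rfl⟩ := mem_image.1 hB
  ext x
  simp only [kerGBlock, mem_filter, and_congr_right_iff]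
  have hjk := (mem_filter.1 hk).2
  exact fun _ => ⟨kerGRelOn_equivalence.trans (kerGRelOn_equivalence.symm hjk),
    kerGRelOn_equivalence.trans hjk⟩

theorem disjoint_kerGBlocks (h : Disjoint S T) :
    Disjoint (kerGBlocks E f S) (kerGBlocks E f T) := by
  refine disjoint_left.2 fun B hBS hBT => ?_
  obtain ⟨k, hk, rfl⟩ := mem_image.1 hBS
  obtain ⟨j, -, hjk⟩ := mem_image.1 hBT
  have hkB : k ∈ kerGBlock E f T j := by
    rw [kerGBlock, hjk]; exact mem_kerGBlock_self hk
  exact disjoint_left.1 h hk (mem_filter.1 hkB).1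

theorem kerGBlocks_univ_eq_union
    (hS : kerGBlocks E f S ⊆ kerGBlocks E f univ)
    (hSc : kerGBlocks E f Sᶜ ⊆ kerGBlocks E f univ) :
    kerGBlocks E f univ = kerGBlocks E f S ∪ kerGBlocks E f Sᶜ := by
  refine Subset.antisymm (fun B hB => ?_) (union_subset hS hSc)
  obtain ⟨k, -, rfl⟩ := mem_image.1 hB
  -- The block of `k` in the part containing `k` is a block of `ker_G[f]` containing `k`.
  have key {U : Finset (Fin m)} (hsub : kerGBlocks E f U ⊆ kerGBlocks E f univ) (hk : k ∈ U) :
      kerGBlock E f univ k ∈ kerGBlocks E f U := by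
    rw [← eq_kerGBlock_of_mem (hsub (kerGBlock_mem_kerGBlocks hk)) (mem_kerGBlock_self hk)]
    exact kerGBlock_mem_kerGBlocks hk
  by_cases hk : k ∈ S
  · exact mem_union_left _ (key hS hk)
  · exact mem_union_right _ (key hSc (mem_compl.2 hk))

end Kernel

section OrderEmbedding

variable {m n : ℕ} (g : Fin n ↪o Fin m)

theorem kerGRelOn_comp_orderEmbedding {V : Type*} (E : V → V → Prop) (f : Fin m → V)
    (U : Finset (Fin n)) (j j' : Fin n) :
    kerGRelOn E (f ∘ g) U j j' ↔ kerGRelOn E f (U.map g.toEmbedding) (g j) (g j') := by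
  simp only [kerGRelOn, forall_mem_map, Function.comp_apply, RelEmbedding.coe_toEmbedding,
    ← g.monotone.map_min, ← g.monotone.map_max, g.lt_iff_lt]

theorem kerGBlocks_map_orderEmbedding {V : Type*} (E : V → V → Prop) (f : Fin m → V)
    (U : Finset (Fin n)) :
    kerGBlocks E f (U.map g.toEmbedding) =
      (kerGBlocks E (f ∘ g) U).image (·.map g.toEmbedding) := by
  simp only [kerGBlocks_eq_image, map_eq_image, image_image]
  refine image_congr fun j _ => ?_
  simp only [Function.comp_apply, kerGBlock, ← map_eq_image, filter_map]
  congr 1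
  exact filter_congr fun j' _ => (kerGRelOn_comp_orderEmbedding g E f U j j').symm

theorem blockProd_map_orderEmbedding {M : Type*} [Monoid M] (a : Fin m → M)
    (B : Finset (Fin n)) : blockProd a (B.map g.toEmbedding) = blockProd (a ∘ g) B := by
  rw [blockProd, blockProd, ← (g.strictMono.strictMonoOn _).map_finsetSort, List.map_map]
  rfl

end OrderEmbedding

theorem blockProd_univ {M : Type*} [Monoid M] {m : ℕ} (a : Fin m → M) :
    blockProd a univ = (List.ofFn a).prod := by
  rw [blockProd, Fin.sort_univ, List.ofFn_eq_map]

theorem BMTIndep.map_blockProd {𝒜 : Type*} [Ring 𝒜] [Algebra ℂ 𝒜] {φ : 𝒜 →ₗ[ℂ] ℂ}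
    (hφ : φ 1 = 1) {I : Type*} {E : I → I → Prop} {A : I → NonUnitalSubalgebra ℂ 𝒜}
    (hindep : BMTIndep φ E A) {m : ℕ} {idx : Fin m → I} {a : Fin m → 𝒜}
    (ha : ∀ k, a k ∈ A (idx k)) (T : Finset (Fin m)) :
    φ (blockProd a T) = ∏ B ∈ kerGBlocks E idx T, φ (blockProd a B) := by
  rcases T.eq_empty_or_nonempty with rfl | hT
  · simp [blockProd, kerGBlocks, hφ]
  set g := T.orderEmbOfFin rfl
  have hT' : (univ : Finset (Fin T.card)).map g.toEmbedding = T := T.map_orderEmbOfFin_univ rfl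
  rw [← hT', kerGBlocks_map_orderEmbedding, prod_image fun _ _ _ _ h => Finset.map_injective _ h,
    blockProd_map_orderEmbedding, blockProd_univ,
    hindep _ hT.card_pos (idx ∘ g) (a ∘ g) fun k => ha (g k)]
  exact prod_congr rfl fun B _ => by rw [blockProd_map_orderEmbedding]

theorem stmt6_general {𝒜 : Type*} [Ring 𝒜] [Algebra ℂ 𝒜] (φ : 𝒜 →ₗ[ℂ] ℂ) (hφ : φ 1 = 1)
    {I : Type*} (E : I → I → Prop)
    (A : I → NonUnitalSubalgebra ℂ 𝒜) (hindep : BMTIndep φ E A)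
    (m : ℕ) (idx : Fin m → I) (a : Fin m → 𝒜) (ha : ∀ k, a k ∈ A (idx k))
    (S : Finset (Fin m))
    (hsub1 : kerGBlocks E idx S ⊆ kerGBlocks E idx Finset.univ)
    (hsub2 : kerGBlocks E idx Sᶜ ⊆ kerGBlocks E idx Finset.univ) :
    φ (List.ofFn a).prod = φ (blockProd a S) * φ (blockProd a Sᶜ) := by
  rw [← blockProd_univ, hindep.map_blockProd hφ ha, kerGBlocks_univ_eq_union hsub1 hsub2,
    prod_union (disjoint_kerGBlocks disjoint_compl_right), ← hindep.map_blockProd hφ ha,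
    ← hindep.map_blockProd hφ ha]

/-- if both `ker_G[i|_S]` and `ker_G[i|_{S^c}]` are contained in `ker_G[i]`
for a window `S` of consecutive indices, then `φ` factorizes over the window. -/
theorem stmt6 {𝒜 : Type*} [Ring 𝒜] [Algebra ℂ 𝒜] (φ : 𝒜 →ₗ[ℂ] ℂ) (hφ : φ 1 = 1)
    {I : Type*} (E : I → I → Prop) (hE : ∀ v, ¬ E v v)
    (A : I → NonUnitalSubalgebra ℂ 𝒜) (hindep : BMTIndep φ E A)
    (m : ℕ) (idx : Fin m → I) (a : Fin m → 𝒜) (ha : ∀ k, a k ∈ A (idx k))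
    (l l' : ℕ) (h1 : l < l') (h2 : l' < m)
    (S : Finset (Fin m)) (hS : S = Finset.univ.filter fun k => l ≤ k.val ∧ k.val < l')
    (hsub1 : kerGBlocks E idx S ⊆ kerGBlocks E idx Finset.univ)
    (hsub2 : kerGBlocks E idx Sᶜ ⊆ kerGBlocks E idx Finset.univ) :
    φ (List.ofFn a).prod = φ (blockProd a S) * φ (blockProd a Sᶜ) :=
  stmt6_general φ hφ E A hindep m idx a ha S hsub1 hsub2

end
end
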